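/- Let p, q, x be real with 0 < |x-p| < |x-q|, and fix t > 0. For ε > 0 set P_ε = |x-p|/√(2tε) and Q_ε = |x-q|/√(2tε). Then erfc(P_ε)/erfc(Q_ε) → ∞ as ε → 0⁺ (i.e. tends to +∞ in the sense of Filter.atTop). -/

import Mathlib

/-!
Both tails are squeezed between Gaussian bounds: for `y ≥ 0` and `z > 0`,
`exp (-(y + 1)²) ≤ erfc y` (integrate over `(y, y + 1]` only) and
`erfc z ≤ exp (-z²) / (2z)` (insert the factor `s / z ≥ 1` and integrate exactly).
With `y = a u`, `z = b u` and `0 < a < b`, the ratio `erfc (a u) / erfc (b u)` is therefore at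
least `2bu · exp ((bu)² - (au + 1)²)`, which tends to infinity since `(bu)² - (au + 1)²` is
the product of `(b - a) u - 1` and `(b + a) u + 1`. Here `u = 1 / √(2tε) → ∞` as
`ε → 0⁺`.
-/

noncomputable def erfc (z : ℝ) : ℝ := ∫ s in Set.Ioi z, Real.exp (-s^2)

open MeasureTheory Real Set Filter Topology

lemma integrable_exp_neg_sq : Integrable fun s : ℝ => exp (-s ^ 2) := by
  simpa using integrable_exp_neg_mul_sq one_pos

lemma integrable_mul_exp_neg_sq : Integrable fun s : ℝ => s * exp (-s ^ 2) := by
  simpa using integrable_mul_exp_neg_mul_sq one_pos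

lemma integral_Ioi_mul_exp_neg_sq (z : ℝ) :
    ∫ s in Ioi z, s * exp (-s ^ 2) = exp (-z ^ 2) / 2 := by
  have hderiv (s : ℝ) : HasDerivAt (fun s : ℝ => -exp (-s ^ 2) / 2) (s * exp (-s ^ 2)) s := by
    have hsq : HasDerivAt (fun s : ℝ => -s ^ 2) (-(2 * s)) s := by
      simpa [Pi.neg_def] using (hasDerivAt_pow 2 s).neg
    exact (hsq.exp.neg.div_const 2).congr_deriv (by ring)
  have hlim : Tendsto (fun s : ℝ => -exp (-s ^ 2) / 2) atTop (𝓝 0) := by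
    have hsq : Tendsto (fun s : ℝ => -s ^ 2) atTop atBot :=
      tendsto_neg_atTop_atBot.comp (tendsto_pow_atTop two_ne_zero)
    simpa using (tendsto_exp_atBot.comp hsq).neg.div_const 2
  rw [integral_Ioi_of_hasDerivAt_of_tendsto' (fun s _ => hderiv s)
    integrable_mul_exp_neg_sq.integrableOn hlim]
  ring

lemma erfc_le_exp_neg_sq_div {z : ℝ} (hz : 0 < z) : erfc z ≤ exp (-z ^ 2) / (2 * z) := by
  have hle : ∀ s ∈ Ioi z, exp (-s ^ 2) ≤ s * exp (-s ^ 2) / z := fun s hs => by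
    rw [le_div_iff₀ hz, mul_comm]
    exact mul_le_mul_of_nonneg_right (le_of_lt hs) (exp_pos _).le
  calc erfc z ≤ ∫ s in Ioi z, s * exp (-s ^ 2) / z :=
        setIntegral_mono_on integrable_exp_neg_sq.integrableOn
          (integrable_mul_exp_neg_sq.div_const z).integrableOn measurableSet_Ioi hle
    _ = exp (-z ^ 2) / (2 * z) := by
        rw [integral_div, integral_Ioi_mul_exp_neg_sq]
        ring

lemma setIntegral_exp_neg_sq_le_erfc {s : Set ℝ} {z : ℝ} (hs : s ⊆ Ioi z) :
    ∫ t in s, exp (-t ^ 2) ≤ erfc z :=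
  setIntegral_mono_set integrable_exp_neg_sq.integrableOn
    (Eventually.of_forall fun _ => (exp_pos _).le) hs.eventuallyLE

lemma exp_neg_add_one_sq_le_erfc {z : ℝ} (hz : 0 ≤ z) : exp (-(z + 1) ^ 2) ≤ erfc z := by
  have hle : ∀ s ∈ Ioc z (z + 1), exp (-(z + 1) ^ 2) ≤ exp (-s ^ 2) := fun s hs => by
    have : s ^ 2 ≤ (z + 1) ^ 2 := pow_le_pow_left₀ (hz.trans hs.1.le) hs.2 2
    exact exp_le_exp.2 (neg_le_neg this)
  calc exp (-(z + 1) ^ 2) = ∫ _ in Ioc z (z + 1), exp (-(z + 1) ^ 2) := by simp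
    _ ≤ ∫ s in Ioc z (z + 1), exp (-s ^ 2) :=
        setIntegral_mono_on (integrableOn_const measure_Ioc_lt_top.ne)
          integrable_exp_neg_sq.integrableOn measurableSet_Ioc hle
    _ ≤ erfc z := setIntegral_exp_neg_sq_le_erfc Ioc_subset_Ioi_self

lemma erfc_pos (z : ℝ) : 0 < erfc z :=
  calc 0 < exp (-(max z 0 + 1) ^ 2) := exp_pos _
    _ ≤ erfc (max z 0) := exp_neg_add_one_sq_le_erfc (le_max_right z 0)
    _ ≤ erfc z := setIntegral_exp_neg_sq_le_erfc (Ioi_subset_Ioi (le_max_left z 0))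

lemma mul_exp_sq_sub_add_one_sq_le_erfc_div_erfc {y z : ℝ} (hy : 0 ≤ y) (hz : 0 < z) :
    2 * z * exp (z ^ 2 - (y + 1) ^ 2) ≤ erfc y / erfc z :=
  calc 2 * z * exp (z ^ 2 - (y + 1) ^ 2) = exp (-(y + 1) ^ 2) / (exp (-z ^ 2) / (2 * z)) := by
        rw [sub_eq_neg_add, exp_add, exp_neg (z ^ 2)]
        field_simp
    _ ≤ exp (-(y + 1) ^ 2) / erfc z := by
        gcongr
        · exact erfc_pos z
        · exact erfc_le_exp_neg_sq_div hz
    _ ≤ erfc y / erfc z := by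
        gcongr
        · exact (erfc_pos z).le
        · exact exp_neg_add_one_sq_le_erfc hy

lemma tendsto_erfc_mul_div_erfc_mul_atTop {a b : ℝ} (ha : 0 < a) (hab : a < b) :
    Tendsto (fun u : ℝ => erfc (a * u) / erfc (b * u)) atTop atTop := by
  have hlin {c : ℝ} (hc : 0 < c) (d : ℝ) : Tendsto (fun u : ℝ => c * u + d) atTop atTop :=
    tendsto_atTop_add_const_right _ d (tendsto_id.const_mul_atTop hc)
  have hexponent : Tendsto (fun u : ℝ => (b * u) ^ 2 - (a * u + 1) ^ 2) atTop atTop := by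
    have := (hlin (sub_pos.2 hab) (-1)).atTop_mul_atTop₀ (hlin (c := b + a) (by linarith) 1)
    refine this.congr fun u => ?_
    ring
  have hbound : Tendsto (fun u : ℝ => 2 * (b * u) * exp ((b * u) ^ 2 - (a * u + 1) ^ 2))
      atTop atTop := by
    have := (hlin (c := 2 * b) (by linarith) 0).atTop_mul_atTop₀
      (tendsto_exp_atTop.comp hexponent)
    refine this.congr fun u => ?_
    simp only [Function.comp, add_zero]
    ring
  refine tendsto_atTop_mono' _ ?_ hbound
  filter_upwards [eventually_gt_atTop 0] with u hu
  exact mul_exp_sq_sub_add_one_sq_le_erfc_div_erfc (by positivity) (by nlinarith)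

lemma tendsto_inv_sqrt_mul_nhdsGT_zero {c : ℝ} (hc : 0 < c) :
    Tendsto (fun ε : ℝ => (√(c * ε))⁻¹) (𝓝[>] 0) atTop := by
  have hsqrt : Tendsto (fun ε : ℝ => √(c * ε)) (𝓝[>] 0) (𝓝 0) := by
    simpa using ((continuous_const.mul continuous_id).sqrt.tendsto (0 : ℝ)).mono_left
      nhdsWithin_le_nhds
  have hpos : ∀ᶠ ε in 𝓝[>] (0 : ℝ), √(c * ε) ∈ Ioi 0 := by
    filter_upwards [self_mem_nhdsWithin] with ε (hε : 0 < ε)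
    exact sqrt_pos.2 (mul_pos hc hε)
  exact tendsto_inv_nhdsGT_zero.comp (tendsto_nhdsWithin_iff.2 ⟨hsqrt, hpos⟩)

theorem erfc_ratio_tendsto_atTop (p q x t : ℝ) (hp : 0 < |x - p|)
    (hpq : |x - p| < |x - q|) (ht : 0 < t) :
    Filter.Tendsto
      (fun ε : ℝ => erfc (|x - p| / Real.sqrt (2 * t * ε)) / erfc (|x - q| / Real.sqrt (2 * t * ε)))
      (nhdsWithin 0 (Set.Ioi 0)) Filter.atTop := by
  have := (tendsto_erfc_mul_div_erfc_mul_atTop hp hpq).comp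
    (tendsto_inv_sqrt_mul_nhdsGT_zero (by positivity : 0 < 2 * t))
  simpa only [Function.comp_def, div_eq_mul_inv] using this
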